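/- arXiv:1506.01456 — 2 statements merged into one kernel-verified Lean document; each statement's English description precedes it below -/
import Mathlib

section
/- Let $\varphi_i = y_i^{d_i} + q_i(y_i) - y_{i+1} - \delta_i y_{i-1}$, $i \in \mathbb{Z}/n\mathbb{Z}$, with $d_i \ge 2$ and $\deg q_i \le d_i - 1$. Any polynomial $g \in \mathbb{C}[y_1,\dots,y_n]$ whose leading monomial (for graded lex order) is $y_1^{d_1-1}\cdots y_n^{d_n-1}$ does not belong to the ideal $\langle \varphi_1,\dots,\varphi_n \rangle$. -/
/-!
For graded lex the leading monomial of `φ i` is `y_i ^ d_i`, and these are pairwise coprime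
(`Disjoint` as exponent vectors). Coprime leading monomials make the `φ i` a Gröbner basis: among
the representations `f = ∑ a_i φ_i`, minimise first the largest monomial `D` occurring in the
products `a_i φ_i`, then the number of products with a nonzero coefficient at `D`. If `D` is
not the leading monomial of `f`, these coefficients cancel, so there are at least two such
products, and adding a monomial multiple of the Koszul syzygy `φ_k e_j - φ_j e_k` removes one of
them without creating a new one. Hence the leading monomial of `f` is divisible by some
`y_i ^ d_i`, which `∏ y_i ^ (d_i - 1)` is not.
-/

open MvPolynomial

/-- `y^a` is strictly smaller than `y^b` in the graded lexicographic order. -/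
def GradedLexLT {n : ℕ} (a b : Fin n →₀ ℕ) : Prop :=
  (∑ i, a i) < (∑ i, b i) ∨
    ((∑ i, a i) = (∑ i, b i) ∧ ∃ j, a j < b j ∧ ∀ i, i < j → a i = b i)

/-- `μ` is the leading monomial of `g` for the graded lexicographic order. -/
def IsLeadingMonomial {n : ℕ} (g : MvPolynomial (Fin n) ℂ) (μ : Fin n →₀ ℕ) : Prop :=
  μ ∈ g.support ∧ ∀ ν ∈ g.support, ν = μ ∨ GradedLexLT ν μ

open scoped Finset Function

theorem Finsupp.add_le_of_disjoint {σ : Type*} {x y u : σ →₀ ℕ} (hxy : Disjoint x y)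
    (hx : x ≤ u) (hy : y ≤ u) : x + y ≤ u := by
  intro k
  have hk : x k = 0 ∨ y k = 0 := by
    simpa [bot_eq_zero] using DFunLike.congr_fun hxy.eq_bot k
  have := hx k
  have := hy k
  simp only [Finsupp.coe_add, Pi.add_apply]
  omega

theorem MvPolynomial.totalDegree_aeval_X_le {σ R : Type*} [CommRing R] (p : Polynomial R)
    (i : σ) : (Polynomial.aeval (X i : MvPolynomial σ R) p).totalDegree ≤ p.natDegree := by
  rw [Polynomial.aeval_eq_sum_range]
  refine (totalDegree_finsetSum _ _).trans (Finset.sup_le fun k hk => ?_)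
  rw [X_pow_eq_monomial]
  refine (totalDegree_smul_le _ _).trans ((totalDegree_monomial_le _ _).trans ?_)
  simpa [Finsupp.sum_single_index, Nat.lt_succ_iff] using hk

namespace MonomialOrder

variable {σ ι R K : Type*} {m : MonomialOrder σ}

theorem degree_le_of_coeff_mul_ne_zero [CommRing R] [NoZeroDivisors R]
    {a b : MvPolynomial σ R} {D : σ →₀ ℕ}
    (hD : m.degree (a * b) ≼[m] D) (hcoeff : (a * b).coeff D ≠ 0) : m.degree b ≤ D := by
  have hab : a * b ≠ 0 := by rintro h; simp [h] at hcoeff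
  have hdeg : m.degree (a * b) = D :=
    m.toSyn.injective (le_antisymm hD (m.le_degree (mem_support_iff.mpr hcoeff)))
  rw [← hdeg, m.degree_mul (left_ne_zero_of_mul hab) (right_ne_zero_of_mul hab)]
  exact le_add_self

theorem degree_le_toSyn_symm_sup [CommRing R] [Fintype ι] (p : ι → MvPolynomial σ R) (i : ι) :
    m.degree (p i) ≼[m] m.toSyn.symm (Finset.univ.sup fun i => m.toSyn (m.degree (p i))) := by
  simpa using Finset.le_sup (f := fun i => m.toSyn (m.degree (p i))) (Finset.mem_univ i)

theorem degree_lt_of_coeff_eq_zero [CommRing R] {p : MvPolynomial σ R} {D : σ →₀ ℕ}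
    (hD : 0 ≺[m] D) (hp : m.degree p ≼[m] D) (hcoeff : p.coeff D = 0) :
    m.degree p ≺[m] D :=
  (m.degree_lt_iff hD).mpr fun _ hc => lt_of_le_of_ne ((m.le_degree hc).trans hp)
    fun h => mem_support_iff.mp hc (m.toSyn.injective h ▸ hcoeff)

variable [Field K] [Fintype ι]

theorem exists_coeff_mul_eq_zero_of_degree_add_le {a b : ι → MvPolynomial σ K}
    {D : σ →₀ ℕ} {j k : ι} (hjk : j ≠ k) (hbj : b j ≠ 0) (hbk : b k ≠ 0)
    (hjkD : m.degree (b j) + m.degree (b k) ≤ D) (ha : ∀ i, m.degree (a i * b i) ≼[m] D) :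
    ∃ a' : ι → MvPolynomial σ K, ∑ i, a' i * b i = ∑ i, a i * b i ∧
      (∀ i, m.degree (a' i * b i) ≼[m] D) ∧ (a' j * b j).coeff D = 0 ∧
      ∀ i, i ≠ j → i ≠ k → a' i = a i := by
  classical
  -- `a'` is `a` minus `t` times the Koszul syzygy `b k • e j - b j • e k`, with the monomial
  -- `t` chosen to cancel the coefficient of `a j * b j` at `D`.
  set c := (a j * b j).coeff D
  set s := D - (m.degree (b j) + m.degree (b k))
  set t : MvPolynomial σ K := monomial s (c / (m.leadingCoeff (b j) * m.leadingCoeff (b k)))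
  have hts : m.degree t ≼[m] s := m.degree_monomial_le _
  have hsD : s + m.degree (b k) + m.degree (b j) = D := by
    rw [add_assoc, add_comm (m.degree (b k)), tsub_add_cancel_of_le hjkD]
  have htbk : m.degree (t * b k) ≼[m] s + m.degree (b k) := by
    grw [m.degree_mul_le, map_add, hts, ← map_add]
  have hdegP : m.degree (t * b k * b j) ≼[m] D := by
    grw [m.degree_mul_le, map_add, htbk, ← map_add, hsD]
  have hcoeffP : (t * b k * b j).coeff D = c := by
    rw [← hsD, m.coeff_mul_of_add_of_degree_le htbk le_rfl,
      m.coeff_mul_of_add_of_degree_le hts le_rfl, coeff_monomial, if_pos rfl]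
    change _ * m.leadingCoeff (b k) * m.leadingCoeff (b j) = c
    field_simp [(m.leadingCoeff_ne_zero_iff).mpr hbj, (m.leadingCoeff_ne_zero_iff).mpr hbk]
  have hsingle : ∀ l x i, x * b l = t * b k * b j →
      m.degree (Pi.single l x i * b i) ≼[m] D := by
    intro l x i hx
    rcases eq_or_ne i l with rfl | hil
    · rwa [Pi.single_eq_same, hx]
    · simp [Pi.single_eq_of_ne hil]
  refine ⟨a + Pi.single k (t * b j) - Pi.single j (t * b k), ?_, fun i => ?_, ?_, ?_⟩
  · simp only [Pi.add_apply, Pi.sub_apply, add_mul, sub_mul, Finset.sum_add_distrib,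
      Finset.sum_sub_distrib, Pi.single_apply, ite_mul, zero_mul, Finset.sum_ite_eq',
      Finset.mem_univ, if_true]
    ring
  · simp only [Pi.add_apply, Pi.sub_apply, add_mul, sub_mul]
    grw [m.degree_sub_le, m.degree_add_le, ha i, hsingle k _ i (by ring), hsingle j _ i rfl]
    simp
  · simp [Pi.single_eq_of_ne hjk, sub_mul, hcoeffP, c]
  · intro i hij hik
    simp [Pi.single_eq_of_ne hij, Pi.single_eq_of_ne hik]

open scoped Classical in
theorem exists_card_coeff_ne_zero_lt {a b : ι → MvPolynomial σ K} (hb : ∀ i, b i ≠ 0)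
    (hcop : Pairwise (Disjoint on fun i => m.degree (b i))) {D : σ →₀ ℕ}
    (ha : ∀ i, m.degree (a i * b i) ≼[m] D) (hsum : ∑ i, (a i * b i).coeff D = 0) {j : ι}
    (hj : (a j * b j).coeff D ≠ 0) :
    ∃ a' : ι → MvPolynomial σ K, ∑ i, a' i * b i = ∑ i, a i * b i ∧
      (∀ i, m.degree (a' i * b i) ≼[m] D) ∧
      #{i | (a' i * b i).coeff D ≠ 0} < #{i | (a i * b i).coeff D ≠ 0} := by
  obtain ⟨k, hkj, hk⟩ : ∃ k, k ≠ j ∧ (a k * b k).coeff D ≠ 0 := by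
    by_contra! h
    rw [Finset.sum_eq_single j (fun k _ hkj => h k hkj) (by simp)] at hsum
    exact hj hsum
  have hjkD : m.degree (b j) + m.degree (b k) ≤ D :=
    Finsupp.add_le_of_disjoint (hcop hkj.symm) (degree_le_of_coeff_mul_ne_zero (ha j) hj)
      (degree_le_of_coeff_mul_ne_zero (ha k) hk)
  obtain ⟨a', hsum', ha', hj', hother⟩ :=
    exists_coeff_mul_eq_zero_of_degree_add_le hkj.symm (hb j) (hb k) hjkD ha
  refine ⟨a', hsum', ha', Finset.card_lt_card (Finset.ssubset_iff_subset_ne.mpr ⟨?_, ?_⟩)⟩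
  · intro i hi
    simp only [Finset.mem_filter, Finset.mem_univ, true_and] at hi ⊢
    rcases eq_or_ne i k with rfl | hik
    · exact hk
    · rwa [← hother i (fun hij => hi (hij ▸ hj')) hik]
  · intro heq
    have hjmem : j ∈ ({i | (a' i * b i).coeff D ≠ 0} : Finset ι) := heq ▸ by simpa using hj
    simp [hj'] at hjmem

theorem exists_degree_le_of_eq_sum_mul {b : ι → MvPolynomial σ K} (hb : ∀ i, b i ≠ 0)
    (hcop : Pairwise (Disjoint on fun i => m.degree (b i))) {f : MvPolynomial σ K}
    (hf : f ≠ 0) {D : σ →₀ ℕ} {a : ι → MvPolynomial σ K} (hfa : ∑ i, a i * b i = f)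
    (ha : ∀ i, m.degree (a i * b i) ≼[m] D) : ∃ i, m.degree (b i) ≤ m.degree f := by
  classical
  induction D using (InvImage.wf m.toSyn wellFounded_lt).induction generalizing a with
  | _ D ihD =>
  obtain ⟨N, hN⟩ : ∃ N, #{i | (a i * b i).coeff D ≠ 0} ≤ N := ⟨_, le_rfl⟩
  induction N using Nat.strong_induction_on generalizing a with
  | _ N ihN =>
  have hfD : m.degree f ≼[m] D := by
    rw [← hfa]
    exact m.degree_sum_le.trans (Finset.sup_le fun i _ => ha i)
  rcases hfD.eq_or_lt with hfD | hfD
  · have hcoeff : (∑ i, a i * b i).coeff D ≠ 0 := by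
      rw [hfa, ← m.toSyn.injective hfD]
      exact m.coeff_degree_ne_zero_iff.mpr hf
    rw [coeff_sum] at hcoeff
    obtain ⟨i, -, hi⟩ := Finset.exists_ne_zero_of_sum_ne_zero hcoeff
    exact ⟨i, m.toSyn.injective hfD ▸ degree_le_of_coeff_mul_ne_zero (ha i) hi⟩
  have hD0 : 0 ≺[m] D := by
    rw [map_zero]
    exact (m.zero_le _).trans_lt hfD
  have hsum : ∑ i, (a i * b i).coeff D = 0 := by
    rw [← coeff_sum, hfa, m.coeff_eq_zero_of_lt hfD]
  by_cases hT : ∀ i, (a i * b i).coeff D = 0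
  · have hlt : ∀ i, m.degree (a i * b i) ≺[m] D := fun i =>
      degree_lt_of_coeff_eq_zero hD0 (ha i) (hT i)
    refine ihD _ ?_ hfa (degree_le_toSyn_symm_sup _)
    have hbot : ⊥ < m.toSyn D := by simpa using hD0
    show _ < m.toSyn D
    simpa [Finset.sup_lt_iff hbot] using hlt
  push Not at hT
  obtain ⟨j, hj⟩ := hT
  obtain ⟨a', hsum', ha', hcard⟩ := exists_card_coeff_ne_zero_lt hb hcop ha hsum hj
  exact ihN _ (hcard.trans_le hN) (hsum'.trans hfa) ha' le_rfl

theorem exists_degree_le_degree_of_mem_span {b : ι → MvPolynomial σ K} (hb : ∀ i, b i ≠ 0)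
    (hcop : Pairwise (Disjoint on fun i => m.degree (b i))) {f : MvPolynomial σ K}
    (hf : f ∈ Ideal.span (Set.range b)) (hf0 : f ≠ 0) :
    ∃ i, m.degree (b i) ≤ m.degree f := by
  obtain ⟨a, hfa⟩ := Ideal.mem_span_range_iff_exists_fun.mp hf
  exact exists_degree_le_of_eq_sum_mul hb hcop hf0 hfa (degree_le_toSyn_symm_sup _)

section DegLex

variable {σ R : Type*} [LinearOrder σ] [WellFoundedGT σ] [CommRing R]

theorem degLex_degree_lt_of_totalDegree_lt {p : MvPolynomial σ R} {d : σ →₀ ℕ}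
    (h : p.totalDegree < d.degree) : degLex.degree p ≺[degLex] d := by
  have hd : (0 : σ →₀ ℕ) ≺[degLex] d := by
    rw [degLex_lt_iff, Finsupp.DegLex.lt_iff]
    simp only [ofDegLex_toDegLex, map_zero]
    omega
  refine (degree_lt_iff hd).mpr fun c hc => ?_
  rw [degLex_lt_iff, Finsupp.DegLex.lt_iff]
  exact Or.inl ((le_totalDegree hc).trans_lt h)

theorem degLex_degree_X_pow_add [Nontrivial R] {p : MvPolynomial σ R} {i : σ} {k : ℕ}
    (h : p.totalDegree < k) : degLex.degree (X i ^ k + p) = Finsupp.single i k := by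
  classical
  have hX : degLex.degree (X i ^ k : MvPolynomial σ R) = Finsupp.single i k := by
    rw [X_pow_eq_monomial, degree_monomial, if_neg one_ne_zero]
  have hp : degLex.degree p ≺[degLex] degLex.degree (X i ^ k : MvPolynomial σ R) := by
    rw [hX]
    exact degLex_degree_lt_of_totalDegree_lt (by simpa using h)
  rw [degree_add_of_lt hp, hX]

end DegLex

end MonomialOrder

open MonomialOrder

theorem gradedLexLT_iff {n : ℕ} {a b : Fin n →₀ ℕ} :
    GradedLexLT a b ↔ a ≺[degLex] b := by
  rw [degLex_lt_iff, Finsupp.DegLex.lt_iff, Finsupp.Lex.lt_iff, GradedLexLT]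
  simp [Finsupp.degree_eq_sum, and_comm]

theorem IsLeadingMonomial.ne_zero {n : ℕ} {g : MvPolynomial (Fin n) ℂ} {μ : Fin n →₀ ℕ}
    (hg : IsLeadingMonomial g μ) : g ≠ 0 :=
  ne_zero_iff.mpr ⟨μ, mem_support_iff.mp hg.1⟩

theorem IsLeadingMonomial.degLex_degree_eq {n : ℕ} {g : MvPolynomial (Fin n) ℂ}
    {μ : Fin n →₀ ℕ} (hg : IsLeadingMonomial g μ) : degLex.degree g = μ := by
  refine degLex.toSyn.injective (le_antisymm ?_ (le_degree hg.1))
  refine degree_le_iff.mpr fun ν hν => ?_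
  rcases hg.2 ν hν with rfl | hlt
  · exact le_rfl
  · exact (gradedLexLT_iff.mp hlt).le

theorem degLex_degree_X_pow_add_aeval_sub_X_sub_C_mul_X {σ R : Type*} [LinearOrder σ]
    [WellFoundedGT σ] [CommRing R] [Nontrivial R] {k : ℕ} (hk : 2 ≤ k) {q : Polynomial R}
    (hq : q.degree ≤ (k - 1 : ℕ)) (i j l : σ) (c : R) :
    degLex.degree (X i ^ k + Polynomial.aeval (X i) q - X j - C c * X l) =
      Finsupp.single i k := by
  rw [add_sub_assoc, add_sub_assoc]
  refine degLex_degree_X_pow_add ?_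
  have hqk : q.natDegree ≤ k - 1 := Polynomial.natDegree_le_iff_degree_le.mpr hq
  have hXl : (C c * X l : MvPolynomial σ R).totalDegree ≤ 1 :=
    (totalDegree_mul _ _).trans (by simp)
  grw [totalDegree_sub, totalDegree_sub, totalDegree_aeval_X_le, totalDegree_X, hXl]
  omega

/-- Any polynomial whose leading monomial (graded lex) is `y₁^{d₁-1} ⋯ yₙ^{dₙ-1}`
does not belong to the ideal `⟨φ₁, …, φₙ⟩`. -/
theorem stmt6 (n : ℕ) [NeZero n] (d : Fin n → ℕ) (hd : ∀ i, 2 ≤ d i)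
    (δ : Fin n → ℂ) (q : Fin n → Polynomial ℂ)
    (hq : ∀ i, (q i).degree ≤ (d i - 1 : ℕ))
    (φ : Fin n → MvPolynomial (Fin n) ℂ)
    (hφ : ∀ i, φ i = X i ^ d i + Polynomial.aeval (X i) (q i)
        - X (i + 1) - C (δ i) * X (i - 1))
    (g : MvPolynomial (Fin n) ℂ)
    (hg : IsLeadingMonomial g (Finsupp.equivFunOnFinite.symm fun i => d i - 1)) :
    g ∉ Ideal.span (Set.range φ) := by
  intro hmem
  have hd0 : ∀ i, d i ≠ 0 := fun i => by have := hd i; omega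
  have hφdeg : ∀ i, degLex.degree (φ i) = Finsupp.single i (d i) := fun i => by
    rw [hφ i]
    exact degLex_degree_X_pow_add_aeval_sub_X_sub_C_mul_X (hd i) (hq i) _ _ _ _
  have hφ0 : ∀ i, φ i ≠ 0 := fun i =>
    ne_zero_of_degree_ne_zero (m := degLex) (by simpa [hφdeg] using hd0 i)
  have hcop : Pairwise (Disjoint on fun i => degLex.degree (φ i)) := fun i j hij => by
    simpa [Function.onFun, hφdeg, Finsupp.disjoint_iff, Finsupp.support_single_disjoint, hd0]
      using hij
  obtain ⟨i, hi⟩ := exists_degree_le_degree_of_mem_span hφ0 hcop hmem hg.ne_zero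
  have hii := hi i
  simp only [hφdeg, hg.degLex_degree_eq, Finsupp.single_eq_same,
    Finsupp.equivFunOnFinite_symm_apply_apply] at hii
  have := hd i
  omega
end

section
/- Let $n \ge 3$, integers $d_i \ge 2$, nonzero $\delta_i \in \mathbb{C}$, and set $\varphi_i = y_i^{d_i} - y_{i+1} - \delta_i y_{i-1}$ (indices mod $n$) in $\mathbb{C}[y_1,\dots,y_n]$. Let $\Phi = \lambda^2 - \lambda\,\mathrm{Tr}(M_n) + \delta$ with $M_n = \prod_{j=n}^{1}\begin{pmatrix}0&1\\-\delta_j& d_j y_j^{d_j-1}\end{pmatrix}$, $\delta = \delta_1\cdots\delta_n$, and $\lambda \ne 0$. Then $y_1 \Phi \notin \langle \varphi_1,\dots,\varphi_n\rangle$. -/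
/-!
Indices start at `0` and are taken modulo `n`, so the paper's `y₁` is `X 0`.

Write `φᵢ = Xᵢ ^ dᵢ - ℓᵢ` with `deg ℓᵢ < dᵢ`, and call a polynomial standard when every exponent of
`Xᵢ` in it is below `dᵢ`. A standard element of `⟨φ₀, …, φₙ₋₁⟩` is zero: in a representation
`∑ gᵢ φᵢ` of it, the top homogeneous part `∑ ḡᵢ Xᵢ ^ dᵢ` vanishes, and since pure powers of distinct
variables only have Koszul syzygies, subtracting an antisymmetric combination `∑ Bᵢⱼ φⱼ` from each
`gᵢ` lowers the degree of the representation. (This is the statement that the `φᵢ` form a Gröbner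
basis for a degree order.)

So it suffices to reduce `X₀ Φ` modulo the ideal to a standard polynomial with a nonzero
coefficient. Write `Mₙ = W L₀` with `W = Lₙ₋₁ ⋯ L₁`. An entry of a product of the matrices `Lⱼ`
over distinct indices has degree at most `dⱼ - 1` in each of these `Xⱼ` and does not involve the
other variables. Hence the only non-standard term of `X₀ Tr Mₙ` is `d₀ X₀ ^ d₀ W₁₁`, and
`X₀ ^ d₀ ≡ X₁ + δ₀ Xₙ₋₁` starts two cascades `Xⱼ ^ dⱼ ≡ Xⱼ₊₁ + δⱼ Xⱼ₋₁` along the chain.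
Following the coefficient of `X₀ ∏_{1 ≤ j ≤ n-2} Xⱼ ^ (dⱼ - 1)` through them gives
`-λ δ₀ (d₀ dₙ₋₁ - 1) ∏_{1 ≤ j ≤ n-2} dⱼ ≠ 0`.
-/

open MvPolynomial Matrix

theorem Finset.sum_sum_sub_mul_mul_eq_zero {ι A : Type*} [CommRing A] (s : Finset ι) (B : ι → ι → A)
    (x : ι → A) : ∑ i ∈ s, ∑ j ∈ s, (B i j - B j i) * x j * x i = 0 := by
  simp only [sub_mul, Finset.sum_sub_distrib]
  rw [sub_eq_zero, Finset.sum_comm]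
  exact Finset.sum_congr rfl fun _ _ => Finset.sum_congr rfl fun _ _ => mul_right_comm _ _ _

namespace MvPolynomial

variable {σ R : Type*} [CommRing R]

theorem degreeOf_monomial_le (s : σ →₀ ℕ) (r : R) (i : σ) : degreeOf i (monomial s r) ≤ s i :=
  degreeOf_le_iff.mpr fun β hβ => by rw [Finset.mem_singleton.mp (support_monomial_subset hβ)]

theorem degreeOf_matrix_mul_apply_le {ι : Type*} [Fintype ι]
    {A B : Matrix ι ι (MvPolynomial σ R)} {i : σ} {a b : ℕ} (hA : ∀ r s, degreeOf i (A r s) ≤ a)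
    (hB : ∀ s c, degreeOf i (B s c) ≤ b) (r c : ι) : degreeOf i ((A * B) r c) ≤ a + b := by
  rw [Matrix.mul_apply]
  exact (degreeOf_sum_le _ _ _).trans <| Finset.sup_le fun s _ =>
    (degreeOf_mul_le _ _ _).trans (add_le_add (hA r s) (hB s c))

theorem exists_degree_eq_add_of_mem_support_mul {p q : MvPolynomial σ R} {β : σ →₀ ℕ}
    (hβ : β ∈ (p * q).support) :
    ∃ γ ∈ p.support, ∃ γ' ∈ q.support, β.degree = γ.degree + γ'.degree := by
  classical
  obtain ⟨γ, hγ, γ', hγ', rfl⟩ := Finset.mem_add.mp (support_mul p q hβ)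
  exact ⟨γ, hγ, γ', hγ', map_add _ _ _⟩

attribute [local instance] MvPolynomial.gradedAlgebra in
theorem homogeneousComponent_mul_of_isHomogeneous {q : MvPolynomial σ R} {k : ℕ}
    (hq : q.IsHomogeneous k) (p : MvPolynomial σ R) (N : ℕ) :
    homogeneousComponent N (p * q) =
      if k ≤ N then homogeneousComponent (N - k) p * q else 0 := by
  have h := DirectSum.coe_decompose_mul_of_right_mem (homogeneousSubmodule σ R) N (a := p) hq
  simp only [← decomposition.decompose'_apply]
  exact h

theorem mem_support_sub_homogeneousComponent {p : MvPolynomial σ R} {N : ℕ} {β : σ →₀ ℕ}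
    (hβ : β ∈ (p - homogeneousComponent N p).support) : β ∈ p.support ∧ β.degree ≠ N := by
  rw [mem_support_iff, coeff_sub, coeff_homogeneousComponent] at hβ
  split_ifs at hβ with h
  · exact absurd (sub_self _) hβ
  · exact ⟨mem_support_iff.mpr (by simpa using hβ), h⟩

def IsStandard (d : σ → ℕ) (p : MvPolynomial σ R) : Prop := ∀ i, p.degreeOf i < d i

section IsStandard

variable {d : σ → ℕ} {p q : MvPolynomial σ R}

theorem IsStandard.add (hp : IsStandard d p) (hq : IsStandard d q) : IsStandard d (p + q) :=
  fun i => (degreeOf_add_le i p q).trans_lt (max_lt (hp i) (hq i))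

theorem IsStandard.C_mul (hp : IsStandard d p) (r : R) : IsStandard d (C r * p) :=
  fun i => (degreeOf_C_mul_le p i r).trans_lt (hp i)

theorem IsStandard.X_mul (hp : IsStandard d p) {j : σ}
    (hj : p.degreeOf j + 1 < d j) : IsStandard d (X j * p) := fun i => by
  classical
  refine (degreeOf_mul_le i _ _).trans_lt ?_
  have hX := degreeOf_monomial_le (Finsupp.single j 1) (1 : R) i
  rw [Finsupp.single_apply] at hX
  split_ifs at hX with hji
  · subst hji
    exact (Nat.add_le_add_right hX _).trans_lt (by omega)
  · exact (Nat.add_le_add_right hX _).trans_lt (by simpa using hp i)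

theorem IsStandard.homogeneousComponent (hp : IsStandard d p) (N : ℕ) :
    IsStandard d (homogeneousComponent N p) := fun i => by
  refine lt_of_le_of_lt ?_ (hp i)
  rw [degreeOf_le_iff]
  intro β hβ
  rw [support_homogeneousComponent, Finset.mem_filter] at hβ
  exact le_degreeOf_of_mem_support i hβ.1

theorem IsStandard.eq_zero_of_mem_span_X_pow (hp : IsStandard d p)
    (hI : p ∈ Ideal.span (Set.range fun i => (X i : MvPolynomial σ R) ^ d i)) : p = 0 := by
  have hrange : Set.range (fun i => (X i : MvPolynomial σ R) ^ d i) =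
      (fun s => monomial s (1 : R)) '' Set.range (fun i => Finsupp.single i (d i)) := by
    rw [← Set.range_comp]
    simp [Function.comp_def, X_pow_eq_monomial]
  rw [hrange, mem_ideal_span_monomial_image] at hI
  rw [← support_eq_empty, Finset.eq_empty_iff_forall_notMem]
  intro β hβ
  obtain ⟨_, ⟨i, rfl⟩, hle⟩ := hI β hβ
  exact (hp i).not_ge ((Finsupp.single_le_iff.mp hle).trans (le_degreeOf_of_mem_support i hβ))

end IsStandard

section Koszul

variable {c : σ → ℕ}

theorem mem_span_X_pow_of_mul_X_pow_mem {s : Set σ} {a : σ} (ha : a ∉ s)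
    {f : MvPolynomial σ R} (h : f * X a ^ c a ∈ Ideal.span ((fun i => X i ^ c i) '' s)) :
    f ∈ Ideal.span ((fun i => X i ^ c i) '' s) := by
  have himage : (fun i => (X i : MvPolynomial σ R) ^ c i) '' s =
      (fun m => monomial m (1 : R)) '' ((fun i => Finsupp.single i (c i)) '' s) := by
    rw [Set.image_image]
    simp [X_pow_eq_monomial]
  rw [himage, mem_ideal_span_monomial_image] at h ⊢
  intro β hβ
  have hmem : β + Finsupp.single a (c a) ∈ (f * X a ^ c a).support := by
    rw [mem_support_iff, X_pow_eq_monomial, coeff_mul_monomial, mul_one]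
    exact mem_support_iff.mp hβ
  obtain ⟨_, ⟨i, hi, rfl⟩, hle⟩ := h _ hmem
  have hia : a ≠ i := fun hai => ha (hai ▸ hi)
  refine ⟨_, ⟨i, hi, rfl⟩, Finsupp.single_le_iff.mpr ?_⟩
  simpa [Finsupp.single_apply, hia] using Finsupp.single_le_iff.mp hle

theorem exists_eq_sum_sub_mul_X_pow (s : Finset σ) {f : σ → MvPolynomial σ R}
    (h : ∑ i ∈ s, f i * X i ^ c i = 0) :
    ∃ B : σ → σ → MvPolynomial σ R, ∀ i ∈ s, f i = ∑ j ∈ s, (B i j - B j i) * X j ^ c j := by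
  classical
  induction s using Finset.induction_on generalizing f with
  | empty => exact ⟨0, by simp⟩
  | @insert a s ha ih =>
    rw [Finset.sum_insert ha] at h
    have hfa : f a ∈ Ideal.span ((fun i => X i ^ c i) '' (s : Set σ)) := by
      refine mem_span_X_pow_of_mul_X_pow_mem (by exact_mod_cast ha) ?_
      rw [eq_neg_of_add_eq_zero_left h]
      exact neg_mem (Ideal.sum_mem _ fun i hi =>
        Ideal.mul_mem_left _ _ (Ideal.subset_span ⟨i, hi, rfl⟩))
    obtain ⟨u, hu⟩ := (Submodule.mem_span_image_finset_iff_exists_fun' _).mp hfa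
    simp only [smul_eq_mul] at hu
    obtain ⟨B, hB⟩ := ih (f := fun i => f i + u i * X a ^ c a) (by
      have hua : ∑ i ∈ s, u i * X a ^ c a * X i ^ c i = f a * X a ^ c a := by
        rw [← hu, Finset.sum_mul]
        exact Finset.sum_congr rfl fun _ _ => by ring
      simp only [add_mul, Finset.sum_add_distrib]
      rw [hua, add_comm, h])
    refine ⟨fun i j => if i = a then u j else if j = a then 0 else B i j, fun i hi => ?_⟩
    rcases Finset.mem_insert.mp hi with rfl | hi
    · rw [Finset.sum_insert ha, ← hu]
      simp only [sub_self, zero_mul, zero_add]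
      refine Finset.sum_congr rfl fun j hj => ?_
      simp [ne_of_mem_of_not_mem hj ha]
    · have hia : i ≠ a := ne_of_mem_of_not_mem hi ha
      rw [Finset.sum_insert ha, eq_sub_of_add_eq (hB i hi)]
      simp only [hia, if_true, if_false, zero_sub, neg_mul]
      rw [sub_eq_add_neg, add_comm]
      congr 1
      refine Finset.sum_congr rfl fun j hj => ?_
      simp [ne_of_mem_of_not_mem hj ha]

theorem exists_homogeneous_eq_sum_sub_mul_X_pow [Fintype σ] (hc : ∀ i, 0 < c i) {D : ℕ}
    {f : σ → MvPolynomial σ R} (hf : ∀ i, ∀ β ∈ (f i).support, β.degree + c i = D)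
    (h : ∑ i, f i * X i ^ c i = 0) :
    ∃ B : σ → σ → MvPolynomial σ R, (∀ i j, ∀ β ∈ (B i j).support, β.degree + c i + c j = D) ∧
      ∀ i, f i = ∑ j, (B i j - B j i) * X j ^ c j := by
  obtain ⟨B, hB⟩ := exists_eq_sum_sub_mul_X_pow Finset.univ h
  let B' i j := if c i + c j ≤ D then homogeneousComponent (D - (c i + c j)) (B i j) else 0
  refine ⟨B', fun i j β hβ => ?_, fun i => ?_⟩
  · simp only [B'] at hβ
    split_ifs at hβ with hij
    · rw [support_homogeneousComponent, Finset.mem_filter] at hβ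
      omega
    · simp at hβ
  · have hfi : homogeneousComponent (D - c i) (f i) = f i := by
      ext β
      rw [coeff_homogeneousComponent]
      split_ifs with hβ
      · rfl
      · exact (notMem_support_iff.mp fun hβ' => hβ (by have := hf i β hβ'; omega)).symm
    rw [← hfi, hB i (Finset.mem_univ i), map_sum]
    refine Finset.sum_congr rfl fun j _ => ?_
    rw [homogeneousComponent_mul_of_isHomogeneous (isHomogeneous_X_pow j (c j)), map_sub]
    simp only [B', add_comm (c j) (c i)]
    by_cases hij : c i + c j ≤ D
    · rw [if_pos (by omega), if_pos hij, if_pos hij, Nat.sub_sub]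
    · rw [if_neg (by have := hc j; omega), if_neg hij, if_neg hij, sub_zero, zero_mul]

end Koszul

section LeadingForms

variable [Fintype σ] {d : σ → ℕ} {ℓ : σ → MvPolynomial σ R}

theorem homogeneousComponent_sum_mul_X_pow_sub {D : ℕ} (hℓ : ∀ i, (ℓ i).totalDegree < d i)
    {g : σ → MvPolynomial σ R} (hg : ∀ i, ∀ β ∈ (g i).support, β.degree + d i ≤ D) :
    homogeneousComponent D (∑ i, g i * (X i ^ d i - ℓ i)) =
      ∑ i, homogeneousComponent (D - d i) (g i) * X i ^ d i := by
  rw [map_sum]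
  refine Finset.sum_congr rfl fun i _ => ?_
  by_cases hdi : d i ≤ D
  · have hℓi : homogeneousComponent D (g i * ℓ i) = 0 :=
      homogeneousComponent_eq_zero' _ _ fun γ hγ => by
        obtain ⟨β, hβ, β', hβ', hγβ⟩ := exists_degree_eq_add_of_mem_support_mul hγ
        have := hg i β hβ
        have := (le_totalDegree hβ').trans_lt (hℓ i)
        change _ = _ + β'.sum fun _ e => e at hγβ
        omega
    rw [mul_sub, map_sub, hℓi, sub_zero,
      homogeneousComponent_mul_of_isHomogeneous (isHomogeneous_X_pow i (d i)), if_pos hdi]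
  · have hgi : g i = 0 := support_eq_empty.mp <| Finset.eq_empty_of_forall_notMem fun β hβ =>
      hdi (le_of_add_le_right (hg i β hβ))
    simp [hgi]

theorem exists_lower_degree_of_isStandard (hℓ : ∀ i, (ℓ i).totalDegree < d i) {D : ℕ}
    {g : σ → MvPolynomial σ R} (hg : ∀ i, ∀ β ∈ (g i).support, β.degree + d i ≤ D)
    (hstd : IsStandard d (∑ i, g i * (X i ^ d i - ℓ i))) :
    ∃ g' : σ → MvPolynomial σ R, (∀ i, ∀ β ∈ (g' i).support, β.degree + d i < D) ∧
      ∑ i, g' i * (X i ^ d i - ℓ i) = ∑ i, g i * (X i ^ d i - ℓ i) := by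
  classical
  have hsyz : ∑ i, homogeneousComponent (D - d i) (g i) * X i ^ d i = 0 := by
    refine IsStandard.eq_zero_of_mem_span_X_pow (d := d) ?_ ?_
    · rw [← homogeneousComponent_sum_mul_X_pow_sub hℓ hg]
      exact hstd.homogeneousComponent D
    · exact Ideal.sum_mem _ fun i _ => Ideal.mul_mem_left _ _ (Ideal.subset_span ⟨i, rfl⟩)
  obtain ⟨B, hBdeg, hB⟩ := exists_homogeneous_eq_sum_sub_mul_X_pow (c := d) (D := D)
    (fun i => (Nat.zero_le _).trans_lt (hℓ i)) (fun i β hβ => by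
      rw [support_homogeneousComponent, Finset.mem_filter] at hβ
      have := hg i β hβ.1
      omega) hsyz
  refine ⟨fun i => g i - ∑ j, (B i j - B j i) * (X j ^ d j - ℓ j), fun i β hβ => ?_, ?_⟩
  · have hexp : g i - ∑ j, (B i j - B j i) * (X j ^ d j - ℓ j) =
        (g i - homogeneousComponent (D - d i) (g i)) + ∑ j, (B i j - B j i) * ℓ j := by
      rw [hB i]
      simp only [mul_sub, Finset.sum_sub_distrib]
      ring
    simp only [hexp] at hβ
    rcases Finset.mem_union.mp (support_add hβ) with hβ | hβ
    · obtain ⟨hβg, hβN⟩ := mem_support_sub_homogeneousComponent hβ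
      have := hg i β hβg
      omega
    · obtain ⟨j, -, hβj⟩ := Finset.mem_biUnion.mp (support_sum hβ)
      obtain ⟨γ, hγ, γ', hγ', hβγ⟩ := exists_degree_eq_add_of_mem_support_mul hβj
      have hγD : γ.degree + d i + d j = D := by
        rcases Finset.mem_union.mp (support_sub σ _ _ hγ) with hγ | hγ
        · exact hBdeg i j γ hγ
        · have := hBdeg j i γ hγ
          omega
      have := (le_totalDegree hγ').trans_lt (hℓ j)
      change _ = _ + γ'.sum fun _ e => e at hβγ
      omega
  · simp only [sub_mul _ (∑ j, _), Finset.sum_sub_distrib, Finset.sum_mul]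
    rw [Finset.sum_sum_sub_mul_mul_eq_zero, sub_zero]

theorem IsStandard.eq_zero_of_mem_span (hℓ : ∀ i, (ℓ i).totalDegree < d i)
    {p : MvPolynomial σ R} (hp : IsStandard d p)
    (hI : p ∈ Ideal.span (Set.range fun i => X i ^ d i - ℓ i)) : p = 0 := by
  obtain ⟨g, rfl⟩ := Ideal.mem_span_range_iff_exists_fun.mp hI
  suffices key : ∀ D (g : σ → MvPolynomial σ R), (∀ i, ∀ β ∈ (g i).support, β.degree + d i < D) →
      IsStandard d (∑ i, g i * (X i ^ d i - ℓ i)) → ∑ i, g i * (X i ^ d i - ℓ i) = 0 from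
    key _ g (fun i β hβ => Nat.lt_succ_of_le <| (Nat.add_le_add_right (le_totalDegree hβ) _).trans
      (Finset.le_sup (f := fun i => (g i).totalDegree + d i) (Finset.mem_univ i))) hp
  intro D
  induction D with
  | zero =>
    intro g hg _
    have hg0 : ∀ i, g i = 0 := fun i => support_eq_empty.mp <|
      Finset.eq_empty_of_forall_notMem fun β hβ => Nat.not_lt_zero _ (hg i β hβ)
    simp [hg0]
  | succ D ih =>
    intro g hg hstd
    obtain ⟨g', hg', heq⟩ :=
      exists_lower_degree_of_isStandard hℓ (fun i β hβ => Nat.lt_succ_iff.mp (hg i β hβ)) hstd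
    rw [← heq] at hstd ⊢
    exact ih g' hg' hstd

end LeadingForms

section ReducesTo

variable {I : Ideal (MvPolynomial σ R)} {d : σ → ℕ} {m : σ →₀ ℕ} {p q : MvPolynomial σ R} {a b : R}

variable (I d m) in
def ReducesTo (p : MvPolynomial σ R) (c : R) : Prop :=
  ∃ s, p - s ∈ I ∧ IsStandard d s ∧ coeff m s = c

theorem IsStandard.reducesTo (hp : IsStandard d p) : ReducesTo I d m p (coeff m p) :=
  ⟨p, by simp, hp, rfl⟩

theorem IsStandard.reducesTo_zero (hp : IsStandard d p) {i : σ} (hi : p.degreeOf i < m i) :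
    ReducesTo I d m p 0 :=
  ⟨p, by simp, hp, notMem_support_iff.mp (notMem_support_of_degreeOf_lt i hi)⟩

theorem ReducesTo.add (hp : ReducesTo I d m p a) (hq : ReducesTo I d m q b) :
    ReducesTo I d m (p + q) (a + b) := by
  obtain ⟨s, hs, hsd, rfl⟩ := hp
  obtain ⟨t, ht, htd, rfl⟩ := hq
  refine ⟨s + t, ?_, hsd.add htd, coeff_add _ _ _⟩
  rw [add_sub_add_comm]
  exact I.add_mem hs ht

theorem ReducesTo.C_mul (hp : ReducesTo I d m p a) (r : R) : ReducesTo I d m (C r * p) (r * a) := by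
  obtain ⟨s, hs, hsd, rfl⟩ := hp
  refine ⟨C r * s, ?_, hsd.C_mul r, coeff_C_mul _ _ _⟩
  rw [← mul_sub]
  exact I.mul_mem_left _ hs

theorem ReducesTo.of_sub_mem (hq : ReducesTo I d m q a) (h : p - q ∈ I) : ReducesTo I d m p a := by
  obtain ⟨s, hs, hsd, rfl⟩ := hq
  refine ⟨s, ?_, hsd, rfl⟩
  rw [← sub_add_sub_cancel p q s]
  exact I.add_mem h hs

theorem ReducesTo.eq_zero (hI : ∀ s ∈ I, IsStandard d s → s = 0) (hp : ReducesTo I d m p a)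
    (hpI : p ∈ I) : a = 0 := by
  obtain ⟨s, hs, hsd, rfl⟩ := hp
  have hsI : s ∈ I := by simpa using I.sub_mem hpI hs
  rw [hI s hsI hsd, coeff_zero]

end ReducesTo

end MvPolynomial

namespace Fin

open Fin.NatCast

variable {n : ℕ} [NeZero n]

theorem natCast_ne_natCast {i j : ℕ} (hi : i < n) (hj : j < n) (h : i ≠ j) : (i : Fin n) ≠ j :=
  fun e => h (by simpa [Fin.val_cast_of_lt hi, Fin.val_cast_of_lt hj] using congrArg Fin.val e)

theorem natCast_add_one_sub_one (m : ℕ) : ((m + 1 : ℕ) : Fin n) - 1 = m := by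
  rw [Nat.cast_succ, add_sub_cancel_right]

theorem zero_sub_one_eq_natCast : (0 : Fin n) - 1 = ((n - 1 : ℕ) : Fin n) := by
  rw [eq_comm, eq_sub_iff_add_eq, ← Nat.cast_add_one, Nat.sub_add_cancel NeZero.one_le,
    Fin.natCast_self]

end Fin

namespace PurePowerSystem

open Fin.NatCast

variable {n : ℕ} {K : Type*} [CommRing K] (d : Fin n → ℕ) (δ : Fin n → K)

noncomputable def transfer (j : Fin n) : Matrix (Fin 2) (Fin 2) (MvPolynomial (Fin n) K) :=
  !![0, 1; -C (δ j), C (d j : K) * X j ^ (d j - 1)]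

@[simp] theorem transfer_zero_zero (j : Fin n) : transfer d δ j 0 0 = 0 := rfl

@[simp] theorem transfer_zero_one (j : Fin n) : transfer d δ j 0 1 = 1 := rfl

@[simp] theorem transfer_one_zero (j : Fin n) : transfer d δ j 1 0 = -C (δ j) := rfl

@[simp] theorem transfer_one_one (j : Fin n) :
    transfer d δ j 1 1 = C (d j : K) * X j ^ (d j - 1) := rfl

theorem degreeOf_transfer_le (j i : Fin n) (r s : Fin 2) :
    degreeOf i (transfer d δ j r s) ≤ Finsupp.single j (d j - 1) i := by
  fin_cases r <;> fin_cases s <;> simp only [transfer, of_apply, cons_val', cons_val_zero,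
    cons_val_one, empty_val', cons_val_fin_one, Fin.zero_eta, Fin.mk_one]
  · simp
  · simp
  · simp [degreeOf_neg]
  · rw [C_mul_X_pow_eq_monomial]
    exact degreeOf_monomial_le _ _ _

noncomputable def topExp (a k : ℕ) : Fin n →₀ ℕ :=
  Finsupp.equivFunOnFinite.symm fun i => if a ≤ (i : ℕ) ∧ (i : ℕ) < a + k then d i - 1 else 0

theorem topExp_apply (a k : ℕ) (i : Fin n) :
    topExp d a k i = if a ≤ (i : ℕ) ∧ (i : ℕ) < a + k then d i - 1 else 0 := rfl

variable [NeZero n]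

noncomputable def phi (i : Fin n) : MvPolynomial (Fin n) K :=
  X i ^ d i - X (i + 1) - C (δ i) * X (i - 1)

noncomputable def phiIdeal : Ideal (MvPolynomial (Fin n) K) := Ideal.span (Set.range (phi d δ))

noncomputable def transferProd (a : ℕ) : ℕ → Matrix (Fin 2) (Fin 2) (MvPolynomial (Fin n) K)
  | 0 => 1
  | k + 1 => transfer d δ ((a + k : ℕ) : Fin n) * transferProd a k

noncomputable def witnessExp : Fin n →₀ ℕ := Finsupp.single 0 1 + topExp d 1 (n - 2)

theorem transferProd_succ' (a k : ℕ) :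
    transferProd d δ a (k + 1) = transferProd d δ (a + 1) k * transfer d δ (a : Fin n) := by
  induction k generalizing a with
  | zero => simp [transferProd]
  | succ k ih =>
    rw [transferProd, ih, transferProd, Matrix.mul_assoc, Nat.add_right_comm a 1 k]
    rfl

theorem list_prod_eq_transferProd :
    ((List.ofFn (transfer d δ)).reverse).prod = transferProd d δ 0 n := by
  suffices h : ∀ k ≤ n, ((List.ofFn (transfer d δ)).take k).reverse.prod = transferProd d δ 0 k by
    simpa [List.take_of_length_le] using h n le_rfl
  intro k hk
  induction k with
  | zero => simp [transferProd]
  | succ k ih =>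
    rw [List.take_add_one, List.getElem?_ofFn, List.reverse_append, List.prod_append, ih (by omega)]
    simp only [Nat.lt_of_succ_le hk, dite_true, Option.toList_some,
      List.reverse_singleton, List.prod_singleton, transferProd, zero_add]
    congr 2
    ext
    simp [Fin.val_cast_of_lt (Nat.lt_of_succ_le hk)]

theorem topExp_succ {a k : ℕ} (h : a + k < n) :
    topExp d a (k + 1) =
      topExp d a k + Finsupp.single ((a + k : ℕ) : Fin n) (d (a + k : ℕ) - 1) := by
  ext i
  have hval : (((a + k : ℕ) : Fin n) : ℕ) = a + k := Fin.val_cast_of_lt h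
  rw [Finsupp.add_apply, topExp_apply, topExp_apply, Finsupp.single_apply]
  rcases eq_or_ne ((a + k : ℕ) : Fin n) i with rfl | hne
  · rw [hval, if_pos ⟨by omega, by omega⟩, if_neg (by omega), if_pos rfl, zero_add]
  · have : (i : ℕ) ≠ a + k := fun e => hne (Fin.ext (hval.trans e.symm))
    rw [if_neg hne, add_zero]
    exact if_congr (by omega) rfl rfl

theorem degreeOf_transferProd_le {a k : ℕ} (h : a + k ≤ n) (i : Fin n) (r c : Fin 2) :
    degreeOf i (transferProd d δ a k r c) ≤ topExp d a k i := by
  induction k generalizing r c with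
  | zero =>
    rw [transferProd, Matrix.one_apply]
    split_ifs <;> simp
  | succ k ih =>
    rw [topExp_succ d (by omega), Finsupp.add_apply, add_comm (topExp d a k i)]
    exact degreeOf_matrix_mul_apply_le (fun r s => degreeOf_transfer_le d δ _ i r s)
      (fun r c => ih (by omega) r c) r c

theorem degreeOf_transferProd_eq_zero {a k : ℕ} (h : a + k ≤ n) {i : Fin n}
    (hi : (i : ℕ) < a ∨ a + k ≤ i) (r c : Fin 2) : degreeOf i (transferProd d δ a k r c) = 0 :=
  Nat.le_zero.mp <| (degreeOf_transferProd_le d δ h i r c).trans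
    (by rw [topExp_apply, if_neg (by omega)])

theorem isStandard_transferProd (hd : ∀ i, 2 ≤ d i) {a k : ℕ} (h : a + k ≤ n) (r c : Fin 2) :
    IsStandard d (transferProd d δ a k r c) := fun i =>
  (degreeOf_transferProd_le d δ h i r c).trans_lt <| by
    have := hd i
    rw [topExp_apply]
    split_ifs <;> omega

theorem coeff_topExp_transferProd (hd : ∀ i, 2 ≤ d i) {a k : ℕ} (h : a + k ≤ n) :
    coeff (topExp d a k) (transferProd d δ a k 1 1) =
      ∏ j ∈ Finset.range k, (d (a + j : ℕ) : K) := by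
  induction k with
  | zero =>
    have : topExp d a 0 = 0 := by ext i; simp [topExp_apply]
    simp [transferProd, this]
  | succ k ih =>
    have hj : (((a + k : ℕ) : Fin n) : ℕ) = a + k := Fin.val_cast_of_lt (by omega)
    have hzero : coeff (topExp d a k + Finsupp.single ((a + k : ℕ) : Fin n) (d (a + k : ℕ) - 1))
        (-C (δ (a + k : ℕ)) * transferProd d δ a k 0 1) = 0 := by
      rw [neg_mul, coeff_neg, coeff_C_mul, notMem_support_iff.mp, mul_zero, neg_zero]
      refine notMem_support_of_degreeOf_lt ((a + k : ℕ) : Fin n) ?_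
      rw [degreeOf_transferProd_eq_zero d δ (by omega) (by omega), Finsupp.add_apply,
        Finsupp.single_eq_same]
      have := hd ((a + k : ℕ) : Fin n)
      omega
    rw [transferProd, Matrix.mul_apply, Fin.sum_univ_two, topExp_succ d (by omega),
      transfer_one_zero, transfer_one_one, coeff_add, hzero, C_mul_X_pow_eq_monomial,
      add_comm (topExp d a k), coeff_monomial_mul, ih (by omega), Finset.prod_range_succ, zero_add,
      mul_comm]

theorem witnessExp_zero : witnessExp d 0 = 1 := by
  simp [witnessExp, topExp_apply]

theorem witnessExp_one (hn : 3 ≤ n) :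
    witnessExp d ((1 : ℕ) : Fin n) = d ((1 : ℕ) : Fin n) - 1 := by
  have h1 : (((1 : ℕ) : Fin n) : ℕ) = 1 := Fin.val_cast_of_lt (by omega)
  have hne : ((0 : ℕ) : Fin n) ≠ ((1 : ℕ) : Fin n) :=
    Fin.natCast_ne_natCast (by omega) (by omega) zero_ne_one
  rw [Nat.cast_zero] at hne
  rw [witnessExp, Finsupp.add_apply, Finsupp.single_apply, if_neg hne, zero_add, topExp_apply,
    if_pos (by rw [h1]; omega)]

theorem witnessExp_ne_zero (hn : 3 ≤ n) (hd : ∀ i, 2 ≤ d i) {i : ℕ} (hi : i ≤ 1) :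
    witnessExp d (i : Fin n) ≠ 0 := by
  interval_cases i
  · simp [witnessExp_zero]
  · rw [witnessExp_one d hn]
    have := hd ((1 : ℕ) : Fin n)
    omega

theorem coeff_witnessExp_X_zero_mul (p : MvPolynomial (Fin n) K) :
    coeff (witnessExp d) (X 0 * p) = coeff (topExp d 1 (n - 2)) p := by
  rw [coeff_X_mul', if_pos (by simp [witnessExp_zero]), witnessExp, add_tsub_cancel_left]

theorem eq_zero_of_mem_phiIdeal (hd : ∀ i, 2 ≤ d i) {s : MvPolynomial (Fin n) K}
    (hs : s ∈ phiIdeal d δ) (hstd : IsStandard d s) : s = 0 := by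
  have hphi : phi d δ = fun i => X i ^ d i - (X (i + 1) + C (δ i) * X (i - 1)) :=
    funext fun i => by rw [phi, sub_sub]
  refine hstd.eq_zero_of_mem_span (fun i => ?_) (by rwa [phiIdeal, hphi] at hs)
  refine (totalDegree_add _ _).trans_lt (max_lt ?_ ?_) <;>
    [rw [X]; rw [C_mul_X_eq_monomial]] <;>
    exact (totalDegree_monomial_le _ _).trans_lt (by simpa using Nat.lt_of_succ_le (hd i))

theorem isStandard_X_mul_transferProd (hd : ∀ i, 2 ≤ d i) {a k j : ℕ} (h : a + k ≤ n)
    (hj : j < n) (hjr : j < a ∨ a + k ≤ j) (r c : Fin 2) :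
    IsStandard d (X (j : Fin n) * transferProd d δ a k r c) := by
  refine (isStandard_transferProd d δ hd h r c).X_mul ?_
  rw [degreeOf_transferProd_eq_zero d δ h (by rwa [Fin.val_cast_of_lt hj])]
  have := hd (j : Fin n)
  omega

theorem reducesTo_zero_X_mul_transferProd (hn : 3 ≤ n) (hd : ∀ i, 2 ≤ d i) {a k j i : ℕ}
    (h : a + k ≤ n) (hj : j < n) (hjr : j < a ∨ a + k ≤ j) (hi : i ≤ 1) (hir : i < a ∨ a + k ≤ i)
    (hij : i ≠ j) (r c : Fin 2) :
    ReducesTo (phiIdeal d δ) d (witnessExp d) (X (j : Fin n) * transferProd d δ a k r c) 0 := by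
  refine (isStandard_X_mul_transferProd d δ hd h hj hjr r c).reducesTo_zero (i := (i : Fin n)) ?_
  refine (degreeOf_mul_le _ _ _).trans_lt ?_
  rw [degreeOf_X_of_ne (Fin.natCast_ne_natCast (by omega) hj hij),
    degreeOf_transferProd_eq_zero d δ h (by rwa [Fin.val_cast_of_lt (by omega)])]
  exact Nat.pos_of_ne_zero (witnessExp_ne_zero d hn hd hi)

theorem X_mul_transfer_sub_mem (j : Fin n) (hj : 1 ≤ d j) :
    X j * transfer d δ j 1 1 - C (d j : K) * (X (j + 1) + C (δ j) * X (j - 1)) ∈ phiIdeal d δ := by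
  have : X j * transfer d δ j 1 1 - C (d j : K) * (X (j + 1) + C (δ j) * X (j - 1)) =
      C (d j : K) * phi d δ j := by
    rw [transfer_one_one, phi, mul_left_comm, ← pow_succ', Nat.sub_add_cancel hj]
    ring
  rw [this]
  exact Ideal.mul_mem_left _ _ (Ideal.subset_span ⟨j, rfl⟩)

section Steps

variable {d δ} {c₁ c₂ c₃ : K} (j : Fin n) (P : Matrix (Fin 2) (Fin 2) (MvPolynomial (Fin n) K))

theorem reducesTo_X_mul_transfer_mul (hj : 1 ≤ d j)
    (h₁ : ReducesTo (phiIdeal d δ) d (witnessExp d) (X j * P 0 1) c₁)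
    (h₂ : ReducesTo (phiIdeal d δ) d (witnessExp d) (X (j + 1) * P 1 1) c₂)
    (h₃ : ReducesTo (phiIdeal d δ) d (witnessExp d) (X (j - 1) * P 1 1) c₃) :
    ReducesTo (phiIdeal d δ) d (witnessExp d) (X j * (transfer d δ j * P) 1 1)
      (-δ j * c₁ + d j * c₂ + d j * (δ j * c₃)) := by
  refine (((h₁.C_mul (-δ j)).add (h₂.C_mul (d j))).add ((h₃.C_mul (δ j)).C_mul (d j))).of_sub_mem ?_
  convert Ideal.mul_mem_left _ (P 1 1) (X_mul_transfer_sub_mem d δ j hj) using 1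
  simp only [Matrix.mul_apply, Fin.sum_univ_two, transfer_one_zero, map_neg, map_natCast]
  ring

theorem reducesTo_X_mul_mul_transfer (hj : 1 ≤ d j)
    (h₁ : ReducesTo (phiIdeal d δ) d (witnessExp d) (X j * P 1 0) c₁)
    (h₂ : ReducesTo (phiIdeal d δ) d (witnessExp d) (X (j + 1) * P 1 1) c₂)
    (h₃ : ReducesTo (phiIdeal d δ) d (witnessExp d) (X (j - 1) * P 1 1) c₃) :
    ReducesTo (phiIdeal d δ) d (witnessExp d) (X j * (P * transfer d δ j) 1 1)
      (c₁ + d j * c₂ + d j * (δ j * c₃)) := by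
  refine ((h₁.add (h₂.C_mul (d j))).add ((h₃.C_mul (δ j)).C_mul (d j))).of_sub_mem ?_
  convert Ideal.mul_mem_left _ (P 1 1) (X_mul_transfer_sub_mem d δ j hj) using 1
  simp only [Matrix.mul_apply, Fin.sum_univ_two, transfer_zero_one, map_natCast]
  ring

end Steps

theorem reducesTo_zero_X_mul_transferProd_one (hn : 3 ≤ n) (hd : ∀ i, 2 ≤ d i) :
    ∀ m, m + 2 ≤ n →
      ReducesTo (phiIdeal d δ) d (witnessExp d) (X (m : Fin n) * transferProd d δ 1 m 1 1) 0
  | 0, _ => reducesTo_zero_X_mul_transferProd d δ hn hd (by omega) (by omega) (by omega) le_rfl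
      (by omega) (by omega) 1 1
  | m + 1, hm => by
    have h := reducesTo_X_mul_transfer_mul ((m + 1 : ℕ) : Fin n) (transferProd d δ 1 m)
      (by have := hd ((m + 1 : ℕ) : Fin n); omega)
      (reducesTo_zero_X_mul_transferProd d δ hn hd (i := 0) (by omega) (by omega) (by omega)
        (by omega) (by omega) (by omega) 0 1)
      (by rw [← Nat.cast_add_one]
          exact reducesTo_zero_X_mul_transferProd d δ hn hd (i := 0) (by omega) (by omega)
            (by omega) (by omega) (by omega) (by omega) 1 1)
      (by rw [Fin.natCast_add_one_sub_one]
          exact reducesTo_zero_X_mul_transferProd_one hn hd m (by omega))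
    rw [transferProd, add_comm 1 m]
    simpa using h

theorem reducesTo_zero_X_mul_transferProd_of_add_eq (hn : 3 ≤ n) (hd : ∀ i, 2 ≤ d i) :
    ∀ k a, a + k = n → 1 ≤ a →
      ReducesTo (phiIdeal d δ) d (witnessExp d) (X (a : Fin n) * transferProd d δ a k 1 1) 0
  | 0, a, ha, _ => by
    rw [show a = n by omega]
    simpa using reducesTo_zero_X_mul_transferProd d δ hn hd (a := n) (k := 0) (j := 0) (i := 1)
      (by omega) (by omega) (by omega) le_rfl (by omega) (by omega) 1 1
  | k + 1, a, ha, ha1 => by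
    obtain ⟨b, rfl⟩ : ∃ b, a = b + 1 := ⟨a - 1, by omega⟩
    have h := reducesTo_X_mul_mul_transfer ((b + 1 : ℕ) : Fin n) (transferProd d δ (b + 2) k)
      (by have := hd ((b + 1 : ℕ) : Fin n); omega)
      (reducesTo_zero_X_mul_transferProd d δ hn hd (i := 0) (by omega) (by omega) (by omega)
        (by omega) (by omega) (by omega) 1 0)
      (by rw [← Nat.cast_add_one]
          exact reducesTo_zero_X_mul_transferProd_of_add_eq hn hd k (b + 2) (by omega) (by omega))
      (by rw [Fin.natCast_add_one_sub_one]
          -- `X b * P 1 1` misses `X 0` unless `b = 0`, and then it misses `X 1`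
          exact reducesTo_zero_X_mul_transferProd d δ hn hd (i := if b = 0 then 1 else 0)
            (by omega) (by omega) (by omega) (by split_ifs <;> omega) (by split_ifs <;> omega)
            (by split_ifs <;> omega) 1 1)
    rw [transferProd_succ']
    simpa using h

theorem reducesTo_X_last_mul_transferProd_one (hn : 3 ≤ n) (hd : ∀ i, 2 ≤ d i) :
    ReducesTo (phiIdeal d δ) d (witnessExp d)
      (X ((n - 1 : ℕ) : Fin n) * transferProd d δ 1 (n - 1) 1 1)
      (d ((n - 1 : ℕ) : Fin n) * ∏ j ∈ Finset.range (n - 2), (d (1 + j : ℕ) : K)) := by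
  obtain ⟨m, hm⟩ : ∃ m, n - 1 = m + 1 := ⟨n - 2, by omega⟩
  have hm2 : n - 2 = m := by omega
  rw [hm, hm2]
  have h := reducesTo_X_mul_transfer_mul ((m + 1 : ℕ) : Fin n) (transferProd d δ 1 m)
    (by have := hd ((m + 1 : ℕ) : Fin n); omega)
    (reducesTo_zero_X_mul_transferProd d δ hn hd (i := 0) (by omega) (by omega) (by omega)
      (by omega) (by omega) (by omega) 0 1)
    (by
      rw [← Nat.cast_add_one, show m + 1 + 1 = n by omega, Fin.natCast_self]
      have hstd := isStandard_X_mul_transferProd d δ hd (j := 0) (a := 1) (k := m) (by omega)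
        (by omega) (by omega) 1 1
      rw [Nat.cast_zero] at hstd
      have := hstd.reducesTo (I := phiIdeal d δ) (m := witnessExp d)
      rwa [coeff_witnessExp_X_zero_mul, hm2, coeff_topExp_transferProd d δ hd (by omega)] at this)
    (by rw [Fin.natCast_add_one_sub_one]
        exact reducesTo_zero_X_mul_transferProd_one d δ hn hd m (by omega))
  rw [transferProd, add_comm 1 m]
  simpa using h

theorem transferProd_one_sub_one (hn : 3 ≤ n) : transferProd d δ 1 (n - 1) =
    transfer d δ ((n - 1 : ℕ) : Fin n) * transferProd d δ 1 (n - 2) := by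
  rw [show transferProd d δ 1 (n - 1) = transferProd d δ 1 (n - 2 + 1) by congr 1; omega,
    transferProd, show 1 + (n - 2) = n - 1 by omega]

theorem reducesTo_X_zero_mul_transferProd_zero_one (hn : 3 ≤ n) (hd : ∀ i, 2 ≤ d i) :
    ReducesTo (phiIdeal d δ) d (witnessExp d) (X 0 * transferProd d δ 1 (n - 1) 0 1)
      (∏ j ∈ Finset.range (n - 2), (d (1 + j : ℕ) : K)) := by
  have hstd := isStandard_X_mul_transferProd d δ hd (j := 0) (a := 1) (k := n - 2) (by omega)
    (by omega) (by omega) 1 1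
  rw [Nat.cast_zero] at hstd
  have := hstd.reducesTo (I := phiIdeal d δ) (m := witnessExp d)
  rw [coeff_witnessExp_X_zero_mul, coeff_topExp_transferProd d δ hd (by omega)] at this
  rw [transferProd_one_sub_one d δ hn, Matrix.mul_apply, Fin.sum_univ_two]
  simpa using this

theorem reducesTo_zero_X_zero_mul_transferProd_one_zero (hn : 3 ≤ n) (hd : ∀ i, 2 ≤ d i) :
    ReducesTo (phiIdeal d δ) d (witnessExp d) (X 0 * transferProd d δ 1 (n - 1) 1 0) 0 := by
  have h := (reducesTo_zero_X_mul_transferProd d δ hn hd (a := 2) (k := n - 2) (j := 0) (i := 1)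
    (by omega) (by omega) (by omega) le_rfl (by omega) (by omega) 1 1).C_mul (-δ 1)
  rw [show transferProd d δ 1 (n - 1) = transferProd d δ 1 (n - 2 + 1) by congr 1; omega,
    transferProd_succ', Matrix.mul_apply, Fin.sum_univ_two]
  convert h using 1
  · simp only [Nat.cast_zero, Nat.cast_one, transfer_zero_zero, transfer_one_zero, map_neg]
    ring
  · ring

theorem reducesTo_X_zero_mul_trace (hn : 3 ≤ n) (hd : ∀ i, 2 ≤ d i) :
    ReducesTo (phiIdeal d δ) d (witnessExp d) (X 0 * trace (transferProd d δ 0 n))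
      (δ 0 * (d 0 * d ((n - 1 : ℕ) : Fin n) - 1) *
        ∏ j ∈ Finset.range (n - 2), (d (1 + j : ℕ) : K)) := by
  have hM : transferProd d δ 0 n = transferProd d δ 1 (n - 1) * transfer d δ 0 := by
    rw [show transferProd d δ 0 n = transferProd d δ 0 (n - 1 + 1) by congr 1; omega,
      transferProd_succ', Nat.cast_zero]
  have h11 := reducesTo_X_mul_mul_transfer (0 : Fin n) (transferProd d δ 1 (n - 1))
    (by have := hd 0; omega) (reducesTo_zero_X_zero_mul_transferProd_one_zero d δ hn hd)
    (by
      rw [zero_add, ← Nat.cast_one]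
      exact reducesTo_zero_X_mul_transferProd_of_add_eq d δ hn hd (n - 1) 1 (by omega) le_rfl)
    (by
      rw [Fin.zero_sub_one_eq_natCast]
      exact reducesTo_X_last_mul_transferProd_one d δ hn hd)
  convert (((reducesTo_X_zero_mul_transferProd_zero_one d δ hn hd).C_mul (-δ 0)).add
    h11).of_sub_mem ?_ using 1
  · ring
  convert (phiIdeal d δ).zero_mem using 1
  rw [hM, trace_fin_two, Matrix.mul_apply, Matrix.mul_apply, Fin.sum_univ_two, Fin.sum_univ_two]
  simp only [transfer_zero_zero, transfer_one_zero, map_neg]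
  ring

theorem reducesTo_X_zero_mul (hn : 3 ≤ n) (hd : ∀ i, 2 ≤ d i) (lam : K) :
    ReducesTo (phiIdeal d δ) d (witnessExp d)
      (X 0 * (C (lam ^ 2) - C lam * trace (transferProd d δ 0 n) + C (∏ i, δ i)))
      (-(lam * δ 0 * (d 0 * d ((n - 1 : ℕ) : Fin n) - 1) *
        ∏ j ∈ Finset.range (n - 2), (d (1 + j : ℕ) : K))) := by
  have hX : ReducesTo (phiIdeal d δ) d (witnessExp d) (X 0) 0 := by
    simpa [transferProd] using reducesTo_zero_X_mul_transferProd_one d δ hn hd 0 (by omega)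
  convert (((hX.C_mul (lam ^ 2)).add ((reducesTo_X_zero_mul_trace d δ hn hd).C_mul (-lam))).add
    (hX.C_mul (∏ i, δ i))).of_sub_mem ?_ using 1
  · ring
  convert (phiIdeal d δ).zero_mem using 1
  simp only [map_neg]
  ring

theorem X_zero_mul_notMem [IsDomain K] [CharZero K] (hn : 3 ≤ n) (hd : ∀ i, 2 ≤ d i)
    (hδ : δ 0 ≠ 0) {lam : K} (hlam : lam ≠ 0) :
    X 0 * (C (lam ^ 2) - C lam * trace (transferProd d δ 0 n) + C (∏ i, δ i)) ∉ phiIdeal d δ := by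
  intro hmem
  have hc := (reducesTo_X_zero_mul d δ hn hd lam).eq_zero
    (fun s hs => eq_zero_of_mem_phiIdeal d δ hd hs) hmem
  have hdd : (d 0 : K) * d ((n - 1 : ℕ) : Fin n) - 1 ≠ 0 := by
    have := Nat.mul_le_mul (hd 0) (hd ((n - 1 : ℕ) : Fin n))
    rw [sub_ne_zero]
    exact_mod_cast (by omega : d 0 * d ((n - 1 : ℕ) : Fin n) ≠ 1)
  have hprod : ∏ j ∈ Finset.range (n - 2), (d (1 + j : ℕ) : K) ≠ 0 :=
    Finset.prod_ne_zero_iff.mpr fun j _ => Nat.cast_ne_zero.mpr (by have := hd (1 + j : ℕ); omega)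
  exact mul_ne_zero (mul_ne_zero (mul_ne_zero hlam hδ) hdd) hprod (neg_eq_zero.mp hc)

end PurePowerSystem

open PurePowerSystem in
/-- Lemma 5.3, pure-power case: for `n ≥ 3` and `pⱼ(y) = y^{dⱼ}`,
`y₁ Φ ∉ ⟨φ₁, …, φₙ⟩` where `Φ = λ² - λ Tr(Mₙ) + δ`. -/
theorem stmt9 (n : ℕ) [NeZero n] (hn : 3 ≤ n) (d : Fin n → ℕ) (hd : ∀ i, 2 ≤ d i)
    (δ : Fin n → ℂ) (hδ : ∀ i, δ i ≠ 0)
    (lam : ℂ) (hlam : lam ≠ 0)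
    (φ : Fin n → MvPolynomial (Fin n) ℂ)
    (hφ : ∀ i, φ i = X i ^ d i - X (i + 1) - C (δ i) * X (i - 1))
    (M : Matrix (Fin 2) (Fin 2) (MvPolynomial (Fin n) ℂ))
    (hM : M = ((List.ofFn fun j : Fin n =>
        (!![0, 1; -C (δ j), C (d j : ℂ) * X j ^ (d j - 1)] :
          Matrix (Fin 2) (Fin 2) (MvPolynomial (Fin n) ℂ))).reverse).prod)
    (Φ : MvPolynomial (Fin n) ℂ)
    (hΦ : Φ = C (lam ^ 2) - C lam * Matrix.trace M + C (∏ i, δ i)) :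
    X 0 * Φ ∉ Ideal.span (Set.range φ) := by
  obtain rfl : φ = phi d δ := funext hφ
  have hM' : M = transferProd d δ 0 n := hM.trans (list_prod_eq_transferProd d δ)
  subst hΦ hM'
  exact X_zero_mul_notMem d δ hn hd (hδ 0) hlam
end
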